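/- Uniqueness from the three properties: suppose for each n ≥ 1 two functions F_n, G_n : ℂ^n × ℂ^n → ℂ are given, each of which (i) is symmetric under all permutations of the variables v_1,…,v_n; (ii) as a function of each single variable u_i is entire and satisfies F|_{u_i → u_i+1} = (−1)^n F and F|_{u_i → u_i+τ} = (−1)^n e^{2πi(λ+Σ_{j=1}^n v_j)} e^{−2πin u_i − πin τ} F; (iii) satisfies the recursion F_n(v_n−ħ, u_{n−1},…,u_1; v_n,…,v_1) = [θ(λ+nħ)θ(ħ)/θ(λ+(n−1)ħ)] ∏_{m=1}^{n−1} θ(v_n−v_m−ħ)θ(u_m−v_n) · F_{n−1}(u_{n−1},…,u_1; v_{n−1},…,v_1) for n ≥ 2; and (iv) F_1(u_1; v_1) = θ(u_1−v_1−λ)θ(ħ)/θ(−λ). Then for every n ≥ 1, F_n and G_n agree at every point (u_1,…,u_n, v_1,…,v_n) with v_i − v_j ∉ Γ for all i ≠ j. -/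

import Mathlib

open Complex BigOperators

noncomputable section

/-- The lattice Γ = ℤ + τℤ. -/
def latticeGamma (τ : ℂ) : Set ℂ := {x : ℂ | ∃ a b : ℤ, x = (a : ℂ) + (b : ℂ) * τ}

/-- The three properties (symmetry in the `v`-variables, ellipticity in each `u`-variable,
Izergin-type recursion) together with the initial condition, for a family of functions
`F n : ℂ^n × ℂ^n → ℂ` (with `u i`, `v j` denoting `u_{i+1}`, `v_{j+1}`). -/
def GoodFamily (τ : ℂ) (θ : ℂ → ℂ) (hbar lam : ℂ)
    (F : (n : ℕ) → (Fin n → ℂ) → (Fin n → ℂ) → ℂ) : Prop :=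
  (∀ n, 1 ≤ n → ∀ (u v : Fin n → ℂ) (π : Equiv.Perm (Fin n)),
      F n u (v ∘ π) = F n u v) ∧
  (∀ n, 1 ≤ n → ∀ (u v : Fin n → ℂ) (i : Fin n),
      Differentiable ℂ (fun x : ℂ => F n (Function.update u i x) v) ∧
      (∀ x : ℂ, F n (Function.update u i (x + 1)) v =
        (-1 : ℂ) ^ n * F n (Function.update u i x) v) ∧
      (∀ x : ℂ, F n (Function.update u i (x + τ)) v =
        (-1 : ℂ) ^ n * Complex.exp (2 * (Real.pi : ℂ) * Complex.I * (lam + ∑ j, v j)) *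
          Complex.exp (-(2 * (Real.pi : ℂ) * Complex.I * (n : ℂ) * x) -
            (Real.pi : ℂ) * Complex.I * (n : ℂ) * τ) *
          F n (Function.update u i x) v)) ∧
  (∀ n, 1 ≤ n → ∀ (u : Fin n → ℂ) (v : Fin (n + 1) → ℂ),
      F (n + 1) (Fin.snoc u (v (Fin.last n) - hbar)) v =
        θ (lam + ((n : ℂ) + 1) * hbar) * θ hbar / θ (lam + (n : ℂ) * hbar) *
          (∏ m : Fin n, θ (v (Fin.last n) - v m.castSucc - hbar) *
            θ (u m - v (Fin.last n))) *
          F n u (fun i => v i.castSucc)) ∧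
  (∀ u v : Fin 1 → ℂ, F 1 u v = θ (u 0 - v 0 - lam) * θ hbar / θ (-lam))

lemma lat_sub {τ x y : ℂ} (hx : x ∈ latticeGamma τ) (hy : y ∈ latticeGamma τ) :
    x - y ∈ latticeGamma τ := by
  obtain ⟨a, b, rfl⟩ := hx
  obtain ⟨c, d, rfl⟩ := hy
  exact ⟨a - c, b - d, by push_cast; ring⟩

lemma lat_count (τ : ℂ) : (latticeGamma τ).Countable := by
  have : latticeGamma τ = Set.range (fun p : ℤ × ℤ => (p.1 : ℂ) + (p.2 : ℂ) * τ) := by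
    ext x
    constructor
    · rintro ⟨a, b, rfl⟩; exact ⟨(a, b), rfl⟩
    · rintro ⟨⟨a, b⟩, rfl⟩; exact ⟨a, b, rfl⟩
  rw [this]
  exact Set.countable_range _

lemma lattice_vanish {τ : ℂ} {D : ℂ → ℂ} {c₁ : ℂ} {e : ℂ → ℂ}
    (hc₁ : c₁ ≠ 0) (he : ∀ x, e x ≠ 0)
    (hD1 : ∀ x, D (x + 1) = c₁ * D x) (hDτ : ∀ x, D (x + τ) = e x * D x)
    {x₀ : ℂ} (h0 : D x₀ = 0) : ∀ x, x - x₀ ∈ latticeGamma τ → D x = 0 := by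
  have h1 : ∀ z, D z = 0 → D (z + 1) = 0 := fun z h => by rw [hD1, h, mul_zero]
  have h1' : ∀ z, D z = 0 → D (z - 1) = 0 := by
    intro z h
    have h2 := hD1 (z - 1)
    rw [show (z - 1) + 1 = z by ring] at h2
    rcases mul_eq_zero.mp (h2.symm.trans h) with h' | h'
    · exact absurd h' hc₁
    · exact h'
  have hτ1 : ∀ z, D z = 0 → D (z + τ) = 0 := fun z h => by rw [hDτ, h, mul_zero]
  have hτ1' : ∀ z, D z = 0 → D (z - τ) = 0 := by
    intro z h
    have h2 := hDτ (z - τ)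
    rw [show (z - τ) + τ = z by ring] at h2
    rcases mul_eq_zero.mp (h2.symm.trans h) with h' | h'
    · exact absurd h' (he _)
    · exact h'
  have hP : ∀ p : ℤ, ∀ z, D z = 0 → D (z + p) = 0 := by
    intro p
    induction p using Int.induction_on with
    | zero => intro z h; simpa using h
    | succ p ih =>
      intro z h
      rw [show z + ((p + 1 : ℤ) : ℂ) = (z + (p : ℤ)) + 1 by push_cast; ring]
      exact h1 _ (ih z h)
    | pred p ih =>
      intro z h
      rw [show z + ((-(p:ℤ) - 1 : ℤ) : ℂ) = (z + (-(p:ℤ) : ℤ)) - 1 by push_cast; ring]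
      exact h1' _ (ih z h)
  have hQ : ∀ q : ℤ, ∀ z, D z = 0 → D (z + q * τ) = 0 := by
    intro q
    induction q using Int.induction_on with
    | zero => intro z h; simpa using h
    | succ q ih =>
      intro z h
      rw [show z + ((q + 1 : ℤ) : ℂ) * τ = (z + (q : ℤ) * τ) + τ by push_cast; ring]
      exact hτ1 _ (ih z h)
    | pred q ih =>
      intro z h
      rw [show z + ((-(q:ℤ) - 1 : ℤ) : ℂ) * τ = (z + (-(q:ℤ) : ℤ) * τ) - τ by push_cast; ring]
      exact hτ1' _ (ih z h)
  rintro x ⟨p, q, hx⟩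
  rw [show x = (x₀ + p) + q * τ by linear_combination hx]
  exact hQ q _ (hP p _ h0)

lemma lemmaA {τ : ℂ} (hτ : 0 < τ.im) {c : ℂ} (hc : c ∉ latticeGamma τ)
    {g : ℂ → ℂ} (hg : Differentiable ℂ g)
    (h1 : ∀ u, g (u + 1) = g u)
    (h2 : ∀ u, g (u + τ) = Complex.exp (2 * (Real.pi:ℂ) * Complex.I * c) * g u) :
    ∀ u, g u = 0 := by
  have h2πI : (2 * (Real.pi:ℂ) * Complex.I) ≠ 0 := by
    simp [Real.pi_ne_zero, Complex.I_ne_zero]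
  set f : ℤ → ℂ → ℂ := fun m u => g u * Complex.exp (-(2 * (Real.pi:ℂ) * I * m * u)) with hf
  have hfdiff : ∀ m, Differentiable ℂ (f m) := by
    intro m
    exact hg.mul (Complex.differentiable_exp.comp
      (((differentiable_const _).mul differentiable_id).neg))
  have hfper : ∀ m u, f m (u + 1) = f m u := by
    intro m u
    show g (u+1) * Complex.exp (-(2 * (Real.pi:ℂ) * I * m * (u+1)))
      = g u * Complex.exp (-(2 * (Real.pi:ℂ) * I * m * u))
    have key : (-(2 * (Real.pi:ℂ) * I * m * (u+1)))
        = (-(2 * (Real.pi:ℂ) * I * m * u)) + ((-m : ℤ):ℂ) * (2 * (Real.pi:ℂ) * I) := by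
      push_cast; ring
    rw [h1, key, Complex.exp_add, Complex.exp_int_mul_two_pi_mul_I, mul_one]
  have hfτ : ∀ m u, f m (u + τ)
      = Complex.exp (2 * (Real.pi:ℂ) * I * c - 2 * (Real.pi:ℂ) * I * m * τ) * f m u := by
    intro m u
    show g (u+τ) * Complex.exp (-(2 * (Real.pi:ℂ) * I * m * (u+τ))) = _
    rw [h2 u, show (-(2 * (Real.pi:ℂ) * I * m * (u+τ)))
        = (-(2 * (Real.pi:ℂ) * I * m * u)) + -(2 * (Real.pi:ℂ) * I * m * τ) by ring,
      Complex.exp_add,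
      show (2 * (Real.pi:ℂ) * I * c - 2 * (Real.pi:ℂ) * I * m * τ)
        = 2 * (Real.pi:ℂ) * I * c + -(2 * (Real.pi:ℂ) * I * m * τ) by ring, Complex.exp_add]
    simp only [hf]
    ring
  set K : ℤ → ℝ → ℂ := fun m y => ∫ t in (0:ℝ)..1, f m (t + y * I) with hK
  have step1 : ∀ m (y₁ y₂ : ℝ), K m y₁ = K m y₂ := by
    intro m y₁ y₂
    have h := Complex.integral_boundary_rect_eq_zero_of_differentiableOn (f m) ⟨0, y₁⟩ ⟨1, y₂⟩
      ((hfdiff m).differentiableOn)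
    have hre1 : (⟨0, y₁⟩ : ℂ).re = 0 := rfl
    have hre2 : (⟨1, y₂⟩ : ℂ).re = 1 := rfl
    have him1 : (⟨0, y₁⟩ : ℂ).im = y₁ := rfl
    have him2 : (⟨1, y₂⟩ : ℂ).im = y₂ := rfl
    rw [hre1, hre2, him1, him2] at h
    have hvert : ∀ y : ℝ, f m (((1:ℝ):ℂ) + y * I) = f m (((0:ℝ):ℂ) + y * I) := by
      intro y
      rw [show (((1:ℝ):ℂ) + y * I) = (((0:ℝ):ℂ) + y * I) + 1 by push_cast; ring]
      exact hfper m _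
    rw [intervalIntegral.integral_congr (g := fun y : ℝ => f m (((0:ℝ):ℂ) + y * I))
      (fun y _ => hvert y)] at h
    show (∫ t in (0:ℝ)..1, f m (t + y₁ * I)) = ∫ t in (0:ℝ)..1, f m (t + y₂ * I)
    linear_combination h
  have step2 : ∀ m (y : ℝ), K m (y + τ.im)
      = Complex.exp (2 * (Real.pi:ℂ) * I * c - 2 * (Real.pi:ℂ) * I * m * τ) * K m y := by
    intro m y
    have hpt : ∀ t : ℝ, ((t:ℂ) + ((y + τ.im : ℝ):ℂ) * I) = (((t - τ.re : ℝ):ℂ) + y * I) + τ := by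
      intro t
      apply Complex.ext <;> simp
    have e1 : K m (y + τ.im) = ∫ t in (0:ℝ)..1,
        Complex.exp (2 * (Real.pi:ℂ) * I * c - 2 * (Real.pi:ℂ) * I * m * τ)
          * f m (((t - τ.re : ℝ):ℂ) + y * I) := by
      apply intervalIntegral.integral_congr
      intro t _
      show f m ((t:ℂ) + ((y + τ.im : ℝ):ℂ) * I) = _
      rw [hpt t, hfτ]
    rw [e1, intervalIntegral.integral_const_mul]
    congr 1
    -- periodic shift
    set F : ℝ → ℂ := fun s => f m ((s:ℂ) + y * I) with hF
    have hFper : Function.Periodic F 1 := by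
      intro s
      show f m (((s+1:ℝ):ℂ) + y * I) = f m ((s:ℂ) + y * I)
      rw [show (((s+1:ℝ):ℂ) + y * I) = ((s:ℂ) + y * I) + 1 by push_cast; ring]
      exact hfper m _
    have e2 : (∫ t in (0:ℝ)..1, f m (((t - τ.re : ℝ):ℂ) + y * I))
        = ∫ t in (0:ℝ)..1, F (t - τ.re) := rfl
    rw [e2, intervalIntegral.integral_comp_sub_right F τ.re,
      show (1:ℝ) - τ.re = (0 - τ.re) + 1 by ring, hFper.intervalIntegral_add_eq (0 - τ.re) 0,
      zero_add]
  have step3 : ∀ m (y : ℝ), K m y = 0 := by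
    intro m y
    have hμ : Complex.exp (2 * (Real.pi:ℂ) * I * c - 2 * (Real.pi:ℂ) * I * m * τ) ≠ 1 := by
      intro h
      rw [Complex.exp_eq_one_iff] at h
      obtain ⟨k, hk⟩ := h
      apply hc
      refine ⟨k, m, ?_⟩
      have : (2 * (Real.pi:ℂ) * I) * (c - ((k:ℂ) + (m:ℂ) * τ)) = 0 := by linear_combination hk
      rcases mul_eq_zero.mp this with h' | h'
      · exact absurd h' h2πI
      · linear_combination h'
    have h : K m y = Complex.exp (2 * (Real.pi:ℂ) * I * c - 2 * (Real.pi:ℂ) * I * m * τ) * K m y := by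
      rw [← step2 m y]; exact step1 m y (y + τ.im)
    have : (Complex.exp (2 * (Real.pi:ℂ) * I * c - 2 * (Real.pi:ℂ) * I * m * τ) - 1) * K m y = 0 := by
      linear_combination -h
    rcases mul_eq_zero.mp this with h' | h'
    · exact absurd (by linear_combination h') hμ
    · exact h'
  -- Step 4: Fourier uniqueness
  have key : ∀ (y t : ℝ), g ((t:ℂ) + y * I) = 0 := by
    intro y
    set φ : ℝ → ℂ := fun t => g ((t:ℂ) + y * I) with hφ
    have hφcont : Continuous φ := by
      apply hg.continuous.comp
      continuity
    have hφper : Function.Periodic φ 1 := by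
      intro s
      show g (((s+1:ℝ):ℂ) + y * I) = g ((s:ℂ) + y * I)
      rw [show (((s+1:ℝ):ℂ) + y * I) = ((s:ℂ) + y * I) + 1 by push_cast; ring]
      exact h1 _
    haveI : Fact (0 < (1:ℝ)) := ⟨one_pos⟩
    have hliftcont : Continuous (hφper.lift) := Continuous.quotient_liftOn' hφcont _
    set φbar : C(AddCircle (1:ℝ), ℂ) := ⟨hφper.lift, hliftcont⟩ with hφbar
    have hcoef : ∀ m : ℤ, fourierCoeff (φbar : AddCircle (1:ℝ) → ℂ) m = 0 := by
      intro m
      rw [fourierCoeff_eq_intervalIntegral _ m 0]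
      have hint : (∫ x in (0:ℝ)..(0+1), @fourier (1:ℝ) (-m) x • (φbar : AddCircle (1:ℝ) → ℂ) x)
          = ∫ t in (0:ℝ)..1, Complex.exp (2 * (Real.pi:ℂ) * I * (-m) * t) * φ t := by
        rw [zero_add]
        apply intervalIntegral.integral_congr
        intro t _
        show @fourier (1:ℝ) (-m) (t : AddCircle (1:ℝ)) • hφper.lift ((t:ℝ) : AddCircle (1:ℝ)) = _
        rw [fourier_coe_apply, Function.Periodic.lift_coe, smul_eq_mul]
        congr 2
        push_cast
        ring
      rw [hint]
      have hKrel : K m y = Complex.exp (-(2 * (Real.pi:ℂ) * I * m * (y * I)))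
          * ∫ t in (0:ℝ)..1, Complex.exp (2 * (Real.pi:ℂ) * I * (-m) * t) * φ t := by
        rw [← intervalIntegral.integral_const_mul]
        apply intervalIntegral.integral_congr
        intro t _
        show f m ((t:ℂ) + y * I) = _
        simp only [hf, hφ]
        have hexp : (-(2 * (Real.pi:ℂ) * I * m * ((t:ℂ) + y * I)))
            = (-(2 * (Real.pi:ℂ) * I * m * (y * I))) + 2 * (Real.pi:ℂ) * I * (-(m:ℂ)) * t := by
          push_cast; ring
        rw [hexp, Complex.exp_add]
        ring
      have h0 := step3 m y
      rw [hKrel] at h0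
      rcases mul_eq_zero.mp h0 with h' | h'
      · exact absurd h' (Complex.exp_ne_zero _)
      · rw [h', smul_zero]
    have hsummable : Summable (fourierCoeff (φbar : AddCircle (1:ℝ) → ℂ)) := by
      apply summable_of_ne_finset_zero (s := ∅)
      intro m _
      exact hcoef m
    intro t
    have hs := has_pointwise_sum_fourier_series_of_summable (f := φbar) hsummable
      ((t:ℝ) : AddCircle (1:ℝ))
    have hzero : HasSum (fun i : ℤ => fourierCoeff (φbar : AddCircle (1:ℝ) → ℂ) i
        • fourier i ((t:ℝ) : AddCircle (1:ℝ))) 0 := by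
      have : (fun i : ℤ => fourierCoeff (φbar : AddCircle (1:ℝ) → ℂ) i
          • fourier i ((t:ℝ) : AddCircle (1:ℝ))) = fun _ => 0 := by
        funext i; rw [hcoef i, zero_smul]
      rw [this]
      exact hasSum_zero
    have : φbar ((t:ℝ) : AddCircle (1:ℝ)) = 0 := hs.unique hzero
    rw [show φbar ((t:ℝ) : AddCircle (1:ℝ)) = φ t from Function.Periodic.lift_coe hφper t] at this
    exact this
  intro u
  have := key u.im u.re
  rwa [Complex.re_add_im] at this

/-- Division of an entire function by an entire function with simple zeros. -/
lemma divide_simple_zeros {D ψ : ℂ → ℂ} (hD : Differentiable ℂ D) (hψ : Differentiable ℂ ψ)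
    (hvan : ∀ x, ψ x = 0 → D x = 0) (hsimple : ∀ x, ψ x = 0 → deriv ψ x ≠ 0) :
    ∃ E : ℂ → ℂ, Differentiable ℂ E ∧ ∀ x, D x = E x * ψ x := by
  classical
  set E : ℂ → ℂ := fun x => if ψ x = 0 then deriv D x / deriv ψ x else D x / ψ x with hE
  have hEval : ∀ x, ψ x ≠ 0 → E x = D x / ψ x := fun x hx => by simp [hE, hx]
  have hprod : ∀ x, D x = E x * ψ x := by
    intro x
    by_cases hx : ψ x = 0
    · rw [hx, mul_zero]; exact hvan x hx
    · rw [hEval x hx, div_mul_cancel₀ _ hx]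
  refine ⟨E, ?_, hprod⟩
  intro x₀
  by_cases hx₀ : ψ x₀ = 0
  · -- use dslope
    set N : ℂ → ℂ := dslope D x₀ with hN
    set M : ℂ → ℂ := dslope ψ x₀ with hM
    have hNanal : AnalyticAt ℂ N x₀ := by
      obtain ⟨p, hp⟩ := (hD.analyticAt x₀ : AnalyticAt ℂ D x₀)
      exact hp.has_fpower_series_dslope_fslope.analyticAt
    have hManal : AnalyticAt ℂ M x₀ := by
      obtain ⟨p, hp⟩ := (hψ.analyticAt x₀ : AnalyticAt ℂ ψ x₀)
      exact hp.has_fpower_series_dslope_fslope.analyticAt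
    have hM0 : M x₀ = deriv ψ x₀ := dslope_same ψ x₀
    have hMne : M x₀ ≠ 0 := by rw [hM0]; exact hsimple x₀ hx₀
    have hq : DifferentiableAt ℂ (fun x => N x / M x) x₀ :=
      (hNanal.differentiableAt).div (hManal.differentiableAt) hMne
    have hev : (fun x => N x / M x) =ᶠ[nhds x₀] E := by
      have hMcont : ContinuousAt M x₀ := hManal.continuousAt
      have hne : ∀ᶠ x in nhds x₀, M x ≠ 0 := hMcont.eventually_ne hMne
      filter_upwards [hne] with x hx
      by_cases hxx : x = x₀
      · rw [hxx, hE]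
        simp only [hx₀, if_true]
        rw [show N x₀ = deriv D x₀ from dslope_same D x₀, hM0]
      · have hψx : ψ x = (x - x₀) * M x := by
          show ψ x = (x - x₀) * dslope ψ x₀ x
          have h := sub_smul_dslope ψ x₀ x
          rw [smul_eq_mul] at h
          rw [hx₀] at h
          linear_combination -h
        have hDx : D x = (x - x₀) * N x := by
          show D x = (x - x₀) * dslope D x₀ x
          have h := sub_smul_dslope D x₀ x
          rw [smul_eq_mul] at h
          rw [hvan x₀ hx₀] at h
          linear_combination -h
        have hsub : (x - x₀) ≠ 0 := sub_ne_zero.2 hxx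
        have hψne : ψ x ≠ 0 := by rw [hψx]; exact mul_ne_zero hsub hx
        rw [hEval x hψne, hDx, hψx, mul_div_mul_left _ _ hsub]
    exact (Filter.EventuallyEq.differentiableAt_iff hev).mp hq
  · have hcont : ContinuousAt ψ x₀ := (hψ x₀).continuousAt
    have hne : ∀ᶠ x in nhds x₀, ψ x ≠ 0 := hcont.eventually_ne hx₀
    have hev : (fun x => D x / ψ x) =ᶠ[nhds x₀] E := by
      filter_upwards [hne] with x hx
      exact (hEval x hx).symm
    exact (Filter.EventuallyEq.differentiableAt_iff hev).mp ((hD x₀).div (hψ x₀) hx₀)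

lemma divide_finset {ι : Type*} [DecidableEq ι] (s : Finset ι) (ψ : ι → ℂ → ℂ)
    (hψ : ∀ i ∈ s, Differentiable ℂ (ψ i))
    (hsimple : ∀ i ∈ s, ∀ x, ψ i x = 0 → deriv (ψ i) x ≠ 0)
    (hdisj : ∀ i ∈ s, ∀ j ∈ s, i ≠ j → ∀ x, ψ i x = 0 → ψ j x ≠ 0) :
    ∀ D : ℂ → ℂ, Differentiable ℂ D → (∀ i ∈ s, ∀ x, ψ i x = 0 → D x = 0) →
    ∃ E : ℂ → ℂ, Differentiable ℂ E ∧ ∀ x, D x = E x * ∏ i ∈ s, ψ i x := by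
  induction s using Finset.induction_on with
  | empty =>
    intro D hD _
    exact ⟨D, hD, fun x => by simp⟩
  | @insert i s hi IH =>
    intro D hD hvan
    obtain ⟨E₁, hE₁diff, hE₁⟩ := divide_simple_zeros hD (hψ i (Finset.mem_insert_self i s))
      (hvan i (Finset.mem_insert_self i s)) (hsimple i (Finset.mem_insert_self i s))
    have hvan₁ : ∀ j ∈ s, ∀ x, ψ j x = 0 → E₁ x = 0 := by
      intro j hj x hjx
      have hij : i ≠ j := fun h => hi (h ▸ hj)
      have hine : ψ i x ≠ 0 :=
        hdisj j (Finset.mem_insert_of_mem hj) i (Finset.mem_insert_self i s)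
          (fun h => hij h.symm) x hjx
      have h0 : D x = 0 := hvan j (Finset.mem_insert_of_mem hj) x hjx
      have := hE₁ x
      rw [h0] at this
      rcases mul_eq_zero.mp this.symm with h | h
      · exact h
      · exact absurd h hine
    obtain ⟨E, hEdiff, hEeq⟩ := IH (fun j hj => hψ j (Finset.mem_insert_of_mem hj))
      (fun j hj => hsimple j (Finset.mem_insert_of_mem hj))
      (fun j hj k hk hjk => hdisj j (Finset.mem_insert_of_mem hj) k (Finset.mem_insert_of_mem hk) hjk)
      E₁ hE₁diff hvan₁
    refine ⟨E, hEdiff, fun x => ?_⟩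
    rw [Finset.prod_insert hi, hE₁ x, hEeq x]
    ring

/-- any two families of functions satisfying the symmetry, ellipticity
and recursion properties together with the initial condition agree at all points
whose `v`-variables are pairwise distinct modulo `Γ`. -/
theorem uniqueness_from_three_properties
    (τ : ℂ) (hτ : 0 < τ.im)
    (θ : ℂ → ℂ) (hθdiff : Differentiable ℂ θ)
    (hθ1 : ∀ x : ℂ, θ (x + 1) = -θ x)
    (hθτ : ∀ x : ℂ, θ (x + τ) =
      -Complex.exp (-(2 * (Real.pi : ℂ) * Complex.I * x) - (Real.pi : ℂ) * Complex.I * τ) * θ x)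
    (hθ0 : deriv θ 0 = 1)
    (hθzero : ∀ x : ℂ, θ x = 0 ↔ x ∈ latticeGamma τ)
    (hθsimple : ∀ x ∈ latticeGamma τ, deriv θ x ≠ 0)
    (hbar lam : ℂ) (hbar_nl : hbar ∉ latticeGamma τ)
    (hlam : ∀ k : ℤ, lam + (k : ℂ) * hbar ∉ latticeGamma τ)
    (F G : (n : ℕ) → (Fin n → ℂ) → (Fin n → ℂ) → ℂ)
    (hF : GoodFamily τ θ hbar lam F) (hG : GoodFamily τ θ hbar lam G)
    (n : ℕ) (hn : 1 ≤ n) (u v : Fin n → ℂ)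
    (hv : ∀ i j : Fin n, i ≠ j → v i - v j ∉ latticeGamma τ) :
    F n u v = G n u v := by
  classical
  obtain ⟨hFsym, hFell, hFrec, hFone⟩ := hF
  obtain ⟨hGsym, hGell, hGrec, hGone⟩ := hG
  suffices H : ∀ m : ℕ, ∀ (u v : Fin (m+1) → ℂ),
      (∀ i j : Fin (m+1), i ≠ j → v i - v j ∉ latticeGamma τ) → F (m+1) u v = G (m+1) u v by
    obtain ⟨m, rfl⟩ : ∃ m, n = m + 1 := ⟨n - 1, (Nat.succ_pred_eq_of_pos hn).symm⟩
    exact H m u v hv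
  intro m
  induction m with
  | zero =>
    intro u v _
    rw [hFone u v, hGone u v]
  | succ m IH =>
    intro u v hv
    set i₀ : Fin (m+1+1) := Fin.last (m+1) with hi₀
    set u' : Fin (m+1) → ℂ := fun i => u i.castSucc with hu'
    set D : ℂ → ℂ := fun x =>
      F (m+1+1) (Function.update u i₀ x) v - G (m+1+1) (Function.update u i₀ x) v with hD
    obtain ⟨hFd, hF1, hFτ⟩ := hFell (m+1+1) (by omega) u v i₀
    obtain ⟨hGd, hG1, hGτ⟩ := hGell (m+1+1) (by omega) u v i₀
    have hDdiff : Differentiable ℂ D := hFd.sub hGd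
    have hD1 : ∀ x, D (x + 1) = (-1:ℂ)^(m+1+1) * D x := by
      intro x
      show F _ (Function.update u i₀ (x+1)) v - G _ (Function.update u i₀ (x+1)) v = _
      rw [hF1, hG1]
      show _ = (-1:ℂ)^(m+1+1) * (F _ (Function.update u i₀ x) v - G _ (Function.update u i₀ x) v)
      ring
    set eτ : ℂ → ℂ := fun x =>
      (-1 : ℂ) ^ (m+1+1) * Complex.exp (2 * (Real.pi : ℂ) * Complex.I * (lam + ∑ j, v j)) *
        Complex.exp (-(2 * (Real.pi : ℂ) * Complex.I * ((m+1+1 : ℕ) : ℂ) * x) -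
          (Real.pi : ℂ) * Complex.I * ((m+1+1 : ℕ) : ℂ) * τ) with heτ
    have hDτ : ∀ x, D (x + τ) = eτ x * D x := by
      intro x
      show F _ (Function.update u i₀ (x+τ)) v - G _ (Function.update u i₀ (x+τ)) v = _
      rw [hFτ, hGτ]
      show _ = eτ x * (F _ (Function.update u i₀ x) v - G _ (Function.update u i₀ x) v)
      rw [heτ]
      ring
    have heτne : ∀ x, eτ x ≠ 0 := by
      intro x
      rw [heτ]
      exact mul_ne_zero (mul_ne_zero (pow_ne_zero _ (neg_ne_zero.mpr one_ne_zero))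
        (Complex.exp_ne_zero _)) (Complex.exp_ne_zero _)
    have hsnoc : ∀ y : ℂ, Function.update u i₀ y = Fin.snoc u' y := by
      intro y
      funext j
      induction j using Fin.lastCases with
      | last => rw [Fin.snoc_last, hi₀, Function.update_self]
      | cast i =>
        rw [Fin.snoc_castSucc, Function.update_of_ne (Fin.castSucc_lt_last i).ne, hu']
    -- zeros of D at v k - hbar
    have hDzero : ∀ k : Fin (m+1+1), D (v k - hbar) = 0 := by
      intro k
      set σ : Equiv.Perm (Fin (m+1+1)) := Equiv.swap k i₀ with hσ
      have hσlast : (v ∘ σ) (Fin.last (m+1)) = v k := by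
        show v (σ i₀) = v k
        rw [hσ, Equiv.swap_apply_right]
      set v'' : Fin (m+1) → ℂ := fun i => (v ∘ σ) i.castSucc with hv''def
      have hv'' : ∀ i j : Fin (m+1), i ≠ j → v'' i - v'' j ∉ latticeGamma τ := by
        intro i j hij
        apply hv
        intro hcon
        exact hij (Fin.castSucc_injective _ (σ.injective hcon))
      have eF : F (m+1+1) (Function.update u i₀ (v k - hbar)) v =
          θ (lam + (((m+1 : ℕ) : ℂ) + 1) * hbar) * θ hbar / θ (lam + ((m+1 : ℕ) : ℂ) * hbar) *
          (∏ mm : Fin (m+1), θ ((v ∘ σ) (Fin.last (m+1)) - (v ∘ σ) mm.castSucc - hbar) *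
            θ (u' mm - (v ∘ σ) (Fin.last (m+1)))) * F (m+1) u' v'' := by
        rw [← hFsym (m+1+1) (by omega) (Function.update u i₀ (v k - hbar)) v σ,
          show Function.update u i₀ (v k - hbar)
            = Fin.snoc u' ((v ∘ σ) (Fin.last (m+1)) - hbar) by rw [hσlast]; exact hsnoc _]
        exact hFrec (m+1) (by omega) u' (v ∘ σ)
      have eG : G (m+1+1) (Function.update u i₀ (v k - hbar)) v =
          θ (lam + (((m+1 : ℕ) : ℂ) + 1) * hbar) * θ hbar / θ (lam + ((m+1 : ℕ) : ℂ) * hbar) *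
          (∏ mm : Fin (m+1), θ ((v ∘ σ) (Fin.last (m+1)) - (v ∘ σ) mm.castSucc - hbar) *
            θ (u' mm - (v ∘ σ) (Fin.last (m+1)))) * G (m+1) u' v'' := by
        rw [← hGsym (m+1+1) (by omega) (Function.update u i₀ (v k - hbar)) v σ,
          show Function.update u i₀ (v k - hbar)
            = Fin.snoc u' ((v ∘ σ) (Fin.last (m+1)) - hbar) by rw [hσlast]; exact hsnoc _]
        exact hGrec (m+1) (by omega) u' (v ∘ σ)
      show F (m+1+1) (Function.update u i₀ (v k - hbar)) v
        - G (m+1+1) (Function.update u i₀ (v k - hbar)) v = 0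
      rw [eF, eG, IH u' v'' hv'', sub_self]
    -- D vanishes on all lattice translates of v k - hbar
    have hlatvan : ∀ k : Fin (m+1+1), ∀ x, θ (x - (v k - hbar)) = 0 → D x = 0 := by
      intro k x hx
      have hmem : x - (v k - hbar) ∈ latticeGamma τ := (hθzero _).mp hx
      exact lattice_vanish (pow_ne_zero _ (neg_ne_zero.mpr one_ne_zero)) heτne hD1 hDτ
        (hDzero k) x hmem
    -- factorization
    set ψ : Fin (m+1+1) → ℂ → ℂ := fun k x => θ (x - (v k - hbar)) with hψdef
    have hψdiff : ∀ k ∈ (Finset.univ : Finset (Fin (m+1+1))), Differentiable ℂ (ψ k) :=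
      fun k _ => hθdiff.comp (differentiable_id.sub_const _)
    have hψsimple : ∀ k ∈ (Finset.univ : Finset (Fin (m+1+1))), ∀ x, ψ k x = 0 →
        deriv (ψ k) x ≠ 0 := by
      intro k _ x hx
      have hcd : deriv (ψ k) x = deriv θ (x - (v k - hbar)) := by
        show deriv (fun y => θ (y - (v k - hbar))) x = _
        rw [deriv_comp_sub_const]
      rw [hcd]
      exact hθsimple _ ((hθzero _).mp hx)
    have hψdisj : ∀ i ∈ (Finset.univ : Finset (Fin (m+1+1))),
        ∀ j ∈ (Finset.univ : Finset (Fin (m+1+1))), i ≠ j → ∀ x, ψ i x = 0 → ψ j x ≠ 0 := by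
      intro i _ j _ hij x hix hjx
      have h1 := (hθzero _).mp hix
      have h2 := (hθzero _).mp hjx
      have hsub := lat_sub h1 h2
      rw [show (x - (v i - hbar)) - (x - (v j - hbar)) = v j - v i by ring] at hsub
      exact hv j i (fun h => hij h.symm) hsub
    obtain ⟨E, hEdiff, hEeq⟩ := divide_finset Finset.univ ψ hψdiff hψsimple hψdisj D hDdiff
      (fun k _ x hx => hlatvan k x hx)
    -- multipliers of the product
    have hP1 : ∀ x, (∏ i ∈ Finset.univ, ψ i (x+1))
        = (-1:ℂ)^(m+1+1) * ∏ i ∈ Finset.univ, ψ i x := by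
      intro x
      have hfac : ∀ i : Fin (m+1+1), ψ i (x+1) = (-1) * ψ i x := by
        intro i
        show θ ((x+1) - (v i - hbar)) = -1 * θ (x - (v i - hbar))
        rw [show (x+1) - (v i - hbar) = (x - (v i - hbar)) + 1 by ring, hθ1]
        ring
      rw [Finset.prod_congr rfl (fun i _ => hfac i), Finset.prod_mul_distrib,
        Finset.prod_const, Finset.card_univ, Fintype.card_fin]
    have hPτ : ∀ x, (∏ i ∈ Finset.univ, ψ i (x+τ))
        = (-1:ℂ)^(m+1+1) * Complex.exp (∑ k : Fin (m+1+1),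
            (-(2 * (Real.pi:ℂ) * I * (x - (v k - hbar))) - (Real.pi:ℂ) * I * τ))
          * ∏ i ∈ Finset.univ, ψ i x := by
      intro x
      have hfac : ∀ i : Fin (m+1+1), ψ i (x+τ) = (-1) *
          Complex.exp (-(2 * (Real.pi:ℂ) * I * (x - (v i - hbar))) - (Real.pi:ℂ) * I * τ)
          * ψ i x := by
        intro i
        show θ ((x+τ) - (v i - hbar)) = _
        rw [show (x+τ) - (v i - hbar) = (x - (v i - hbar)) + τ by ring, hθτ]
        ring
      rw [Finset.prod_congr rfl (fun i _ => hfac i), Finset.prod_mul_distrib,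
        Finset.prod_mul_distrib, Finset.prod_const, Finset.card_univ, Fintype.card_fin,
        ← Complex.exp_sum]
    -- the bad set is countable
    have hZsub : {x : ℂ | (∏ i ∈ Finset.univ, ψ i x) = 0} ⊆
        ⋃ k : Fin (m+1+1), (fun t => t + (v k - hbar)) '' (latticeGamma τ) := by
      intro x hx
      simp only [Set.mem_setOf_eq, Finset.prod_eq_zero_iff] at hx
      obtain ⟨k, _, hk⟩ := hx
      exact Set.mem_iUnion.mpr ⟨k, ⟨x - (v k - hbar), (hθzero _).mp hk, by ring⟩⟩
    have hZc : {x : ℂ | (∏ i ∈ Finset.univ, ψ i x) = 0}.Countable :=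
      Set.Countable.mono hZsub (Set.countable_iUnion (fun k => (lat_count τ).image _))
    have hdense : Dense {x : ℂ | (∏ i ∈ Finset.univ, ψ i x) ≠ 0} := by
      have hd := hZc.dense_compl ℂ
      rwa [show {x : ℂ | (∏ i ∈ Finset.univ, ψ i x) = 0}ᶜ
        = {x : ℂ | (∏ i ∈ Finset.univ, ψ i x) ≠ 0} from rfl] at hd
    have hNne : ((-1:ℂ)^(m+1+1)) ≠ 0 := pow_ne_zero _ (neg_ne_zero.mpr one_ne_zero)
    -- periodicity of E
    have hE1fun : (fun x => E (x+1)) = E := by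
      apply Continuous.ext_on hdense
        (hEdiff.continuous.comp (continuous_id.add continuous_const)) hEdiff.continuous
      intro x hx
      have hPx : (∏ i ∈ Finset.univ, ψ i x) ≠ 0 := hx
      have h := hEeq (x+1)
      rw [hD1 x, hEeq x, hP1 x] at h
      have hfac : (E (x+1) - E x) * ((-1:ℂ)^(m+1+1) * ∏ i ∈ Finset.univ, ψ i x) = 0 := by
        linear_combination -h
      rcases mul_eq_zero.mp hfac with h' | h'
      · exact sub_eq_zero.mp h'
      · exact absurd h' (mul_ne_zero hNne hPx)
    have hEτfun : (fun x => E (x+τ)) = fun x =>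
        Complex.exp (2 * (Real.pi:ℂ) * I * (lam + ((m+1+1 : ℕ):ℂ) * hbar)) * E x := by
      apply Continuous.ext_on hdense
        (hEdiff.continuous.comp (continuous_id.add continuous_const))
        (continuous_const.mul hEdiff.continuous)
      intro x hx
      have hPx : (∏ i ∈ Finset.univ, ψ i x) ≠ 0 := hx
      have hS : (∑ k : Fin (m+1+1),
          (-(2 * (Real.pi:ℂ) * I * (x - (v k - hbar))) - (Real.pi:ℂ) * I * τ))
          = 2 * (Real.pi:ℂ) * I * (∑ j, v j) + ((m+1+1 : ℕ):ℂ)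
            * (-(2 * (Real.pi:ℂ) * I * x) - 2 * (Real.pi:ℂ) * I * hbar - (Real.pi:ℂ) * I * τ) := by
        rw [Finset.sum_congr rfl (fun k (_ : k ∈ Finset.univ) =>
          show (-(2 * (Real.pi:ℂ) * I * (x - (v k - hbar))) - (Real.pi:ℂ) * I * τ)
            = 2 * (Real.pi:ℂ) * I * (v k)
              + (-(2 * (Real.pi:ℂ) * I * x) - 2 * (Real.pi:ℂ) * I * hbar - (Real.pi:ℂ) * I * τ)
            by ring), Finset.sum_add_distrib, ← Finset.mul_sum, Finset.sum_const,
          Finset.card_univ, Fintype.card_fin, nsmul_eq_mul]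
      have hkey : eτ x = Complex.exp (2 * (Real.pi:ℂ) * I * (lam + ((m+1+1 : ℕ):ℂ) * hbar))
          * ((-1:ℂ)^(m+1+1) * Complex.exp (∑ k : Fin (m+1+1),
            (-(2 * (Real.pi:ℂ) * I * (x - (v k - hbar))) - (Real.pi:ℂ) * I * τ))) := by
        show (-1:ℂ)^(m+1+1) * Complex.exp (2 * (Real.pi:ℂ) * I * (lam + ∑ j, v j)) *
          Complex.exp (-(2 * (Real.pi:ℂ) * I * ((m+1+1 : ℕ):ℂ) * x)
            - (Real.pi:ℂ) * I * ((m+1+1 : ℕ):ℂ) * τ) = _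
        rw [mul_assoc, ← Complex.exp_add, hS]
        rw [show (2 * (Real.pi:ℂ) * I * (lam + ∑ j, v j)
            + (-(2 * (Real.pi:ℂ) * I * ((m+1+1 : ℕ):ℂ) * x)
              - (Real.pi:ℂ) * I * ((m+1+1 : ℕ):ℂ) * τ))
          = (2 * (Real.pi:ℂ) * I * (lam + ((m+1+1 : ℕ):ℂ) * hbar))
            + (2 * (Real.pi:ℂ) * I * (∑ j, v j) + ((m+1+1 : ℕ):ℂ)
              * (-(2 * (Real.pi:ℂ) * I * x) - 2 * (Real.pi:ℂ) * I * hbar - (Real.pi:ℂ) * I * τ))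
          by ring, Complex.exp_add]
        ring
      have h := hEeq (x+τ)
      rw [hDτ x, hEeq x, hPτ x, hkey] at h
      have hfac : (E (x+τ) - Complex.exp (2 * (Real.pi:ℂ) * I
          * (lam + ((m+1+1 : ℕ):ℂ) * hbar)) * E x)
          * ((-1:ℂ)^(m+1+1) * (Complex.exp (∑ k : Fin (m+1+1),
            (-(2 * (Real.pi:ℂ) * I * (x - (v k - hbar))) - (Real.pi:ℂ) * I * τ))
            * ∏ i ∈ Finset.univ, ψ i x)) = 0 := by
        linear_combination -h
      rcases mul_eq_zero.mp hfac with h' | h'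
      · exact sub_eq_zero.mp h'
      · exact absurd h' (mul_ne_zero hNne (mul_ne_zero (Complex.exp_ne_zero _) hPx))
    -- apply the vanishing lemma
    have hcnot : lam + ((m+1+1 : ℕ):ℂ) * hbar ∉ latticeGamma τ := by
      have hl := hlam ((m : ℤ)+1+1)
      rwa [show (((m : ℤ)+1+1 : ℤ):ℂ) = ((m+1+1 : ℕ):ℂ) by push_cast; ring] at hl
    have hE0 : ∀ x, E x = 0 :=
      lemmaA hτ hcnot hEdiff (fun x => congrFun hE1fun x) (fun x => congrFun hEτfun x)
    have hfin : D (u i₀) = 0 := by rw [hEeq (u i₀), hE0 (u i₀), zero_mul]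
    rw [hD] at hfin
    simp only at hfin
    rw [Function.update_eq_self] at hfin
    exact sub_eq_zero.mp hfin

end
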